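/- arXiv:1404.6441 — 2 statements merged into one kernel-verified Lean document; each statement's English description precedes it below -/
import Mathlib

section
/- Let n be an even positive integer and H an r×n binary matrix whose columns generate F_2^r. Let A be the adjacency matrix of the Cayley graph of F_2^r with generating set the columns of H. Then the binary code generated by the rows of A is self-orthogonal, i.e., any two rows of A are orthogonal over F_2 (including each row with itself). -/
/-!
The `(x, y)` entry of `A Aᵀ` counts the common neighbours of `x` and `y`. For `x = y` this is the
degree `|S| = n`, which is even. For `x ≠ y`, translation by `x + y` is a fixed-point-free
involution of the common neighbours, so their number is even as well.
-/

open Finset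

variable {G : Type*} [AddCommGroup G]

def cayleyAdj [DecidableEq G] (R : Type*) [Zero R] [One R] (S : Finset G) : Matrix G G R :=
  fun x y => if x + y ∈ S then 1 else 0

lemma sum_cayleyAdj_mul_self [Fintype G] [DecidableEq G] {R : Type*} [NonAssocSemiring R]
    (S : Finset G) (x : G) :
    ∑ z, cayleyAdj R S x z * cayleyAdj R S x z = #S := by
  calc ∑ z, cayleyAdj R S x z * cayleyAdj R S x z
      = ∑ z, if x + z ∈ S then (1 : R) else 0 := by
        simp only [cayleyAdj, boole_mul, ← ite_and, and_self]
    _ = ∑ w, if w ∈ S then (1 : R) else 0 := Fintype.sum_equiv (Equiv.addLeft x) _ _ fun _ => rfl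
    _ = #S := by simp

variable [Module (ZMod 2) G]

lemma cayleyAdj_add_add_left [DecidableEq G] {R : Type*} [Zero R] [One R] (S : Finset G)
    (x y z : G) : cayleyAdj R S x (x + y + z) = cayleyAdj R S y z := by
  simp only [cayleyAdj, add_assoc, ← add_assoc x x, ZModModule.add_self, zero_add]

variable [Fintype G]

lemma sum_eq_zero_of_add_left_invariant {R : Type*} [Semiring R] [CharP R 2] (f : G → R)
    {a : G} (ha : a ≠ 0) (hf : ∀ z, f (a + z) = f z) : ∑ z, f z = 0 :=
  sum_ninvolution (a + ·) (fun z => by rw [hf, CharTwo.add_self_eq_zero])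
    (fun _ _ h => ha (add_eq_right.mp h)) (fun _ => mem_univ _)
    (fun z => by rw [← add_assoc, ZModModule.add_self, zero_add])

lemma sum_cayleyAdj_mul_cayleyAdj_of_ne [DecidableEq G] {R : Type*} [CommSemiring R] [CharP R 2]
    (S : Finset G) {x y : G} (hxy : x ≠ y) :
    ∑ z, cayleyAdj R S x z * cayleyAdj R S y z = 0 := by
  have hxy' : x + y ≠ 0 := by rwa [← ZModModule.sub_eq_add, sub_ne_zero]
  refine sum_eq_zero_of_add_left_invariant _ hxy' fun z => ?_
  rw [cayleyAdj_add_add_left, add_comm x y, cayleyAdj_add_add_left, mul_comm]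

theorem cayley_adjacency_self_orthogonal_general
    (r n : ℕ) (hn : Even n)
    (H : Matrix (Fin r) (Fin n) (ZMod 2))
    (hdist : Function.Injective (fun j : Fin n => fun i : Fin r => H i j))
    (S : Finset (Fin r → ZMod 2))
    (hS : S = Finset.image (fun j : Fin n => fun i : Fin r => H i j) Finset.univ)
    (A : Matrix (Fin r → ZMod 2) (Fin r → ZMod 2) (ZMod 2))
    (hA : ∀ x y, A x y = if x + y ∈ S then 1 else 0) :
    ∀ x y : Fin r → ZMod 2, ∑ z : Fin r → ZMod 2, A x z * A y z = 0 := by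
  obtain rfl : A = cayleyAdj (ZMod 2) S := Matrix.ext hA
  intro x y
  rcases eq_or_ne x y with rfl | hxy
  · rw [sum_cayleyAdj_mul_self, hS, card_image_of_injective _ hdist, card_univ, Fintype.card_fin]
    exact ZMod.natCast_eq_zero_iff_even.mpr hn
  · exact sum_cayleyAdj_mul_cayleyAdj_of_ne S hxy

/-- For an r×n binary matrix H (n even, columns distinct, nonzero, generating
F_2^r), the adjacency matrix A of the Cayley graph of F_2^r with the columns of H as
generators generates a self-orthogonal code: any two rows of A are orthogonal over F_2. -/
theorem cayley_adjacency_self_orthogonal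
    (r n : ℕ) (hn : Even n) (hnpos : 0 < n)
    (H : Matrix (Fin r) (Fin n) (ZMod 2))
    (hdist : Function.Injective (fun j : Fin n => fun i : Fin r => H i j))
    (hnz : ∀ j : Fin n, (fun i : Fin r => H i j) ≠ 0)
    (hgen : Submodule.span (ZMod 2)
      (Set.range (fun j : Fin n => fun i : Fin r => H i j)) = ⊤)
    (S : Finset (Fin r → ZMod 2))
    (hS : S = Finset.image (fun j : Fin n => fun i : Fin r => H i j) Finset.univ)
    (A : Matrix (Fin r → ZMod 2) (Fin r → ZMod 2) (ZMod 2))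
    (hA : ∀ x y, A x y = if x + y ∈ S then 1 else 0) :
    ∀ x y : Fin r → ZMod 2, ∑ z : Fin r → ZMod 2, A x z * A y z = 0 :=
  cayley_adjacency_self_orthogonal_general r n hn H hdist S hS A hA
end

section
/- Let t < n and let S be a t-pseudo-border of the hypercube [n]. If S' is obtained from S by taking the symmetric difference with N(T) for a subset T ⊆ [n] with 2 ≤ |T| ≤ t−1, and n is even, then S' is also a t-pseudo-border. -/
/-- The neighbourhood of a subset `S` of `[n]` in the hypercube: all subsets of `[n]`
whose symmetric difference with `S` has exactly one element. -/
def hypercubeNbhd (n : ℕ) (S : Finset (Fin n)) : Finset (Finset (Fin n)) :=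
  Finset.univ.filter (fun T => (symmDiff S T).card = 1)

/-- A `t`-pseudo-border of the hypercube `[n]`: a family `S` of subsets of `[n]` with
`∅ ∈ S`, `|S ∩ N(T)|` even for every `T ⊆ [n]` with `|T| ≤ t - 1`, and every member of
`S` of size at most `t`. -/
def IsPseudoBorder (n t : ℕ) (S : Finset (Finset (Fin n))) : Prop :=
  ∅ ∈ S ∧
  (∀ T : Finset (Fin n), T.card ≤ t - 1 → Even ((S ∩ hypercubeNbhd n T).card)) ∧
  (∀ A ∈ S, A.card ≤ t)

/-!
Intersecting with `N(U)` distributes over the symmetric difference, so the parity condition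
for `S ∆ N(T)` reduces to the parity of `|N(T) ∩ N(U)|`. The common neighbours of `T` and `U`
are the sets `T ∆ {i}` with `|(T ∆ U) ∆ {i}| = 1`: all `n` of them if `T = U`, two of them if
`|T ∆ U| = 2`, and none otherwise, so there is always an even number of them. The other two
conditions hold because `|T| ≠ 1` and the neighbours of `T` have size at most `|T| + 1 ≤ t`.
-/

open Finset
open scoped symmDiff

section SymmDiff

variable {α : Type*} [DecidableEq α]

theorem card_symmDiff_add_two_mul_card_inter (s t : Finset α) :
    #(s ∆ t) + 2 * #(s ∩ t) = #s + #t := by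
  rw [symmDiff_eq_sup_sdiff_inf, sup_eq_union, inf_eq_inter,
    card_sdiff_of_subset inter_subset_union, ← card_union_add_card_inter]
  have : #(s ∩ t) ≤ #(s ∪ t) := card_le_card inter_subset_union
  omega

theorem Even.card_symmDiff {s t : Finset α} (hs : Even #s) (ht : Even #t) :
    Even #(s ∆ t) := by
  have := card_symmDiff_add_two_mul_card_inter s t
  rw [Nat.even_iff] at *
  omega

theorem card_le_card_add_card_symmDiff (s t : Finset α) : #t ≤ #s + #(s ∆ t) := by
  have := card_symmDiff_add_two_mul_card_inter s t
  have : #(s ∩ t) ≤ #s := card_le_card inter_subset_left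
  omega

theorem card_symmDiff_singleton_eq_one_iff {D : Finset α} {i : α} :
    #(D ∆ {i}) = 1 ↔ D = ∅ ∨ #D = 2 ∧ i ∈ D := by
  by_cases hi : i ∈ D
  · rw [symmDiff_of_ge (singleton_subset_iff.2 hi), ← erase_eq, card_erase_of_mem hi]
    have := card_pos.2 ⟨i, hi⟩
    simp only [hi, and_true, ne_empty_of_mem hi, false_or]
    omega
  · rw [symmDiff_eq_union (disjoint_singleton_right.2 hi), union_comm, ← insert_eq,
      card_insert_of_notMem hi]
    simp [hi]

theorem even_card_filter_card_symmDiff_singleton_eq_one [Fintype α]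
    (hα : Even (Fintype.card α)) (D : Finset α) :
    Even #{i | #(D ∆ {i}) = 1} := by
  simp only [card_symmDiff_singleton_eq_one_iff]
  by_cases hD : D = ∅
  · simpa [hD] using hα
  · by_cases h2 : #D = 2 <;> simp [hD, h2]

end SymmDiff

section Hypercube

variable {n : ℕ}

theorem mem_hypercubeNbhd {T V : Finset (Fin n)} : V ∈ hypercubeNbhd n T ↔ #(T ∆ V) = 1 := by
  simp [hypercubeNbhd]

theorem empty_mem_hypercubeNbhd_iff {T : Finset (Fin n)} : ∅ ∈ hypercubeNbhd n T ↔ #T = 1 := by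
  rw [mem_hypercubeNbhd, ← bot_eq_empty, symmDiff_bot]

theorem hypercubeNbhd_eq_image (T : Finset (Fin n)) :
    hypercubeNbhd n T = univ.image (T ∆ {·}) := by
  ext V
  simp only [mem_hypercubeNbhd, card_eq_one, mem_image, mem_univ, true_and]
  constructor
  · rintro ⟨i, hi⟩
    exact ⟨i, by rw [← hi, symmDiff_symmDiff_cancel_left]⟩
  · rintro ⟨i, rfl⟩
    exact ⟨i, symmDiff_symmDiff_cancel_left T {i}⟩

theorem card_hypercubeNbhd_inter (T U : Finset (Fin n)) :
    #(hypercubeNbhd n T ∩ hypercubeNbhd n U) = #{i | #((T ∆ U) ∆ {i}) = 1} := by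
  rw [← filter_mem_eq_inter, hypercubeNbhd_eq_image T, filter_image,
    card_image_of_injective _ fun _ _ h => singleton_injective (symmDiff_right_injective T h)]
  simp only [mem_hypercubeNbhd, symmDiff_left_comm U, symmDiff_assoc]

theorem even_card_hypercubeNbhd_inter (hn : Even n) (T U : Finset (Fin n)) :
    Even #(hypercubeNbhd n T ∩ hypercubeNbhd n U) := by
  rw [card_hypercubeNbhd_inter]
  exact even_card_filter_card_symmDiff_singleton_eq_one (by simpa using hn) _

theorem card_le_card_add_one_of_mem_hypercubeNbhd {T V : Finset (Fin n)}
    (hV : V ∈ hypercubeNbhd n T) : #V ≤ #T + 1 :=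
  mem_hypercubeNbhd.1 hV ▸ card_le_card_add_card_symmDiff T V

end Hypercube

theorem symmDiff_nbhd_pseudoBorder_general (n t : ℕ) (hn : Even n)
    (S : Finset (Finset (Fin n))) (hS : IsPseudoBorder n t S)
    (T : Finset (Fin n)) (hT2 : 2 ≤ T.card) (hTt : T.card ≤ t - 1) :
    IsPseudoBorder n t (symmDiff S (hypercubeNbhd n T)) := by
  obtain ⟨hS0, hS_even, hS_card⟩ := hS
  refine ⟨?_, fun U hU => ?_, fun A hA => ?_⟩
  · exact mem_symmDiff.2 (Or.inl ⟨hS0, by rw [empty_mem_hypercubeNbhd_iff]; omega⟩)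
  · rw [← inf_eq_inter, inf_symmDiff_distrib_right]
    exact (hS_even U hU).card_symmDiff (even_card_hypercubeNbhd_inter hn T U)
  · rcases mem_symmDiff.1 hA with ⟨hA, -⟩ | ⟨hA, -⟩
    · exact hS_card A hA
    · have := card_le_card_add_one_of_mem_hypercubeNbhd hA
      omega

/-- If `n` is even, `t < n`, `S` is a `t`-pseudo-border of `[n]` and
`2 ≤ |T| ≤ t - 1`, then the symmetric difference `S Δ N(T)` is again a
`t`-pseudo-border. -/
theorem symmDiff_nbhd_pseudoBorder (n t : ℕ) (hn : Even n) (ht : t < n)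
    (S : Finset (Finset (Fin n))) (hS : IsPseudoBorder n t S)
    (T : Finset (Fin n)) (hT2 : 2 ≤ T.card) (hTt : T.card ≤ t - 1) :
    IsPseudoBorder n t (symmDiff S (hypercubeNbhd n T)) :=
  symmDiff_nbhd_pseudoBorder_general n t hn S hS T hT2 hTt
end
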